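/- arXiv:1610.02846 — 2 statements merged into one kernel-verified Lean document; each statement's English description precedes it below -/
import Mathlib

section
/- Transfer lemma from discrete to continuous covering (Lemma 1): Let 0 < δ < 1, let Ψ̃ be a tiling of the torus T^n by convex polytopes ψ̃_i associated to points x̃_i with αK + x̃_i ⊆ int(ψ̃_i), let μ ∈ (0,1), and let Λ ⊆ T^n be maximal such that (αμδ/2)K + Λ is a packing. If translates of μ(1−δ)Ψ̃ by vectors y₁,…,y_m cover Λ, then translates of μΨ̃ by the same vectors cover T^n. Consequently τ(T^n, ℱ) ≤ τ(Λ, ℱ'), where ℱ, ℱ' are the families of all translates of μΨ̃ and μ(1−δ)Ψ̃ respectively. -/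
/-- Auxiliary lemma: if every point is within `α*μ*δ` of `Λ` and translates of
the `μ*(1-δ)`-shrunk tiles cover `Λ`, then the corresponding translates of the
`μ`-shrunk tiles cover everything. -/
theorem stmt_13_aux {E : Type*} [NormedAddCommGroup E] [NormedSpace ℝ E]
    {ι : Type*} (ψ : ι → Set E) (x : ι → E) (α δ μ : ℝ)
    (hα : 0 < α) (hδ : 0 < δ) (hδ1 : δ < 1) (hμ : 0 < μ)
    (hconv : ∀ i, Convex ℝ (ψ i))
    (hball : ∀ i, Metric.closedBall (x i) α ⊆ interior (ψ i))
    (Λ : Set E)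
    (key : ∀ p : E, ∃ l ∈ Λ, dist p l ≤ α * μ * δ)
    (J : Type*) (y : J → E)
    (hcov : Λ ⊆ ⋃ j, ⋃ i, (fun z => (μ * (1 - δ)) • (z - x i) + x i + y j) '' ψ i) :
    (⋃ j, ⋃ i, (fun z => μ • (z - x i) + x i + y j) '' ψ i) = Set.univ := by
  apply Set.eq_univ_of_forall
  intro u
  obtain ⟨l, hl, hdist⟩ := key u
  obtain ⟨j, i, z, hz, hle⟩ : ∃ j i z, z ∈ ψ i ∧
      (μ * (1 - δ)) • (z - x i) + x i + y j = l := by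
    have := hcov hl
    simp only [Set.mem_iUnion, Set.mem_image] at this
    obtain ⟨j, i, z, hz, hzz⟩ := this
    exact ⟨j, i, z, hz, hzz⟩
  set v₀ : E := (δ * μ)⁻¹ • (u - l) with hv₀
  have hδμ : δ * μ ≠ 0 := by positivity
  have hv : (δ * μ) • v₀ = u - l := by
    rw [hv₀, smul_smul, mul_inv_cancel₀ hδμ, one_smul]
  have hbmem : x i + v₀ ∈ Metric.closedBall (x i) α := by
    rw [Metric.mem_closedBall]
    have hd : dist (x i + v₀) (x i) = ‖v₀‖ := by simp
    rw [hd, hv₀, norm_smul, norm_inv, Real.norm_eq_abs,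
      abs_of_pos (by positivity : (0:ℝ) < δ * μ)]
    have hnorm : ‖u - l‖ ≤ α * μ * δ := by rwa [← dist_eq_norm]
    have hpos : (0:ℝ) < (δ * μ)⁻¹ := by positivity
    calc (δ * μ)⁻¹ * ‖u - l‖ ≤ (δ * μ)⁻¹ * (α * μ * δ) :=
          mul_le_mul_of_nonneg_left hnorm (le_of_lt hpos)
      _ = α := by field_simp
  have hw : (1 - δ) • z + δ • (x i + v₀) ∈ ψ i :=
    (hconv i) hz (interior_subset (hball i hbmem))
      (by linarith) (le_of_lt hδ) (by ring)
  refine Set.mem_iUnion.2 ⟨j, Set.mem_iUnion.2 ⟨i, ⟨_, hw, ?_⟩⟩⟩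
  show μ • ((1 - δ) • z + δ • (x i + v₀) - x i) + x i + y j = u
  linear_combination (norm := module) hle + hv

/-- Lemma 1: let {ψ i} be a tiling by convex sets with
αK + x i ⊆ int(ψ i) (K the unit ball), 0 < δ < 1, 0 < μ < 1, and let Λ be a
maximal set such that the balls (αμδ/2)K + λ are pairwise disjoint. If
translates of μ(1−δ)Ψ cover Λ, then the corresponding translates of μΨ cover
the whole space; consequently τ(univ, ℱ) ≤ τ(Λ, ℱ'). -/
theorem stmt_13 {E : Type*} [NormedAddCommGroup E] [NormedSpace ℝ E]
    {ι : Type*} (ψ : ι → Set E) (x : ι → E) (α δ μ : ℝ)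
    (hα : 0 < α) (hδ : 0 < δ) (hδ1 : δ < 1) (hμ : 0 < μ) (hμ1 : μ < 1)
    (hconv : ∀ i, Convex ℝ (ψ i))
    (htile : (⋃ i, ψ i) = Set.univ)
    (htiledisj : Pairwise fun i j => Disjoint (interior (ψ i)) (interior (ψ j)))
    (hball : ∀ i, Metric.closedBall (x i) α ⊆ interior (ψ i))
    (Λ : Set E)
    (hpack : Λ.Pairwise fun a b =>
      Disjoint (Metric.closedBall a (α * μ * δ / 2))
        (Metric.closedBall b (α * μ * δ / 2)))
    (hmax : ∀ Λ' : Set E, Λ ⊆ Λ' →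
      (Λ'.Pairwise fun a b =>
        Disjoint (Metric.closedBall a (α * μ * δ / 2))
          (Metric.closedBall b (α * μ * δ / 2))) → Λ' = Λ) :
    (∀ (J : Type*) (y : J → E),
      Λ ⊆ (⋃ j, ⋃ i, (fun z => (μ * (1 - δ)) • (z - x i) + x i + y j) '' ψ i) →
      (⋃ j, ⋃ i, (fun z => μ • (z - x i) + x i + y j) '' ψ i) = Set.univ) ∧
    (∀ m : ℕ,
      (∃ y : Fin m → E,
        Λ ⊆ ⋃ j, ⋃ i, (fun z => (μ * (1 - δ)) • (z - x i) + x i + y j) '' ψ i) →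
      (∃ y : Fin m → E,
        Set.univ ⊆ ⋃ j, ⋃ i, (fun z => μ • (z - x i) + x i + y j) '' ψ i)) := by
  -- Every point of E is within α*μ*δ of some point of Λ (maximality).
  have key : ∀ p : E, ∃ l ∈ Λ, dist p l ≤ α * μ * δ := by
    intro p
    by_cases hp : p ∈ Λ
    · exact ⟨p, hp, by simp; positivity⟩
    by_contra hcon
    push_neg at hcon
    have hpair : (insert p Λ).Pairwise fun a b =>
        Disjoint (Metric.closedBall a (α * μ * δ / 2))
          (Metric.closedBall b (α * μ * δ / 2)) := by
      have far : ∀ b ∈ Λ, Disjoint (Metric.closedBall p (α * μ * δ / 2))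
          (Metric.closedBall b (α * μ * δ / 2)) := by
        intro b hb
        rw [Set.disjoint_left]
        intro z hz1 hz2
        have h1 : dist z p ≤ α * μ * δ / 2 := Metric.mem_closedBall.1 hz1
        have h2 : dist z b ≤ α * μ * δ / 2 := Metric.mem_closedBall.1 hz2
        have : dist p b ≤ α * μ * δ := by
          calc dist p b ≤ dist p z + dist z b := dist_triangle _ _ _
            _ ≤ α * μ * δ / 2 + α * μ * δ / 2 := by
                rw [dist_comm p z]; linarith
            _ = α * μ * δ := by ring
        exact absurd this (not_le.2 (hcon b hb))
      intro a ha b hb hab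
      rcases ha with rfl | ha
      · rcases hb with rfl | hb
        · exact absurd rfl hab
        · exact far b hb
      · rcases hb with rfl | hb
        · exact (far a ha).symm
        · exact hpack ha hb hab
    have := hmax (insert p Λ) (Set.subset_insert _ _) hpair
    exact hp (this ▸ Set.mem_insert p Λ)
  constructor
  · intro J y hcov
    exact stmt_13_aux ψ x α δ μ hα hδ hδ1 hμ hconv hball Λ key J y hcov
  · rintro m ⟨y, hcov⟩
    exact ⟨y, by
      rw [stmt_13_aux ψ x α δ μ hα hδ hδ1 hμ hconv hball Λ key (Fin m) y hcov]⟩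
end

section
/- The tiling parameter of the Euclidean ball with k-point multilattices, γ(B^n, k), is at most 2 for k = ⌈2^n/vol(B^n)⌉: there exists a lattice Ω and a multilattice Φ = ⋃_{i=1}^k (Ω + x_i) together with an associated tiling Ψ by convex polytopes such that for every x ∈ Φ, B^n + x ⊆ ψ_x ⊆ 2B^n + x (up to arbitrarily small ε). -/
/-!
Take a maximal `(2ℤ)ⁿ`-periodic packing of unit balls and its Voronoi tiling. Distinct centres
are at distance at least `2`, so each cell contains the unit ball around its centre; by
maximality every point is within distance `2` of some centre, so each cell lies in the ball of
radius `2`. The unit balls around the centres lying in the cube `[0, 2)ⁿ` are disjoint modulo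
`(2ℤ)ⁿ`, hence fit into the torus of volume `2ⁿ`: there are at most `2ⁿ / vol(Bⁿ)` of them.
-/

open MeasureTheory Metric Set Function Pointwise Topology

theorem Finset.exists_range_eq_of_card_le {α : Type*} {S : Finset α} (hS : S.Nonempty) {k : ℕ}
    (hk : S.card ≤ k) : ∃ x : Fin k → α, Set.range x = S := by
  have : Nonempty S := hS.to_subtype
  have hf : Injective (Fin.castLE hk ∘ S.equivFin) :=
    (Fin.castLE_injective hk).comp S.equivFin.injective
  refine ⟨Subtype.val ∘ invFun (Fin.castLE hk ∘ S.equivFin), ?_⟩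
  rw [range_comp, (invFun_surjective hf).range_eq, image_univ, Subtype.range_coe]

section Voronoi

variable {α : Type*} [MetricSpace α]

def voronoiCell (Y : Set α) (p : α) : Set α := {y | ∀ q ∈ Y, dist y p ≤ dist y q}

theorem closedBall_subset_voronoiCell {Y : Set α} {p : α} {r : ℝ}
    (hY : Y.Pairwise fun p q => 2 * r ≤ dist p q) (hp : p ∈ Y) :
    closedBall p r ⊆ voronoiCell Y p := by
  intro y hy q hq
  rw [mem_closedBall] at hy
  rcases eq_or_ne q p with rfl | hqp
  · exact le_rfl
  · linarith [hY hq hp hqp, dist_triangle q y p, dist_comm y q]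

theorem voronoiCell_subset_closedBall {Y : Set α} {R : ℝ} (hY : ∀ y, ∃ q ∈ Y, dist y q ≤ R)
    (p : α) : voronoiCell Y p ⊆ closedBall p R := fun y hy =>
  let ⟨q, hq, hyq⟩ := hY y
  (hy q hq).trans hyq

theorem biUnion_voronoiCell_eq_univ [ProperSpace α] {Y : Set α} (hY : IsClosed Y)
    (hne : Y.Nonempty) : ⋃ p ∈ Y, voronoiCell Y p = univ := by
  refine eq_univ_of_forall fun y => ?_
  obtain ⟨p, hp, hd⟩ := hY.exists_infDist_eq_dist hne y
  exact mem_biUnion hp fun q hq => hd ▸ infDist_le_dist_of_mem hq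

end Voronoi

section VoronoiInner

variable {F : Type*} [NormedAddCommGroup F] [InnerProductSpace ℝ F]

theorem dist_le_dist_iff_inner_le (p q y : F) :
    dist y p ≤ dist y q ↔ 2 * inner ℝ y (q - p) ≤ ‖q‖ ^ 2 - ‖p‖ ^ 2 := by
  rw [← sq_le_sq₀ dist_nonneg dist_nonneg, dist_eq_norm, dist_eq_norm, norm_sub_sq_real,
    norm_sub_sq_real, inner_sub_right]
  constructor <;> intro h <;> linarith

theorem convex_voronoiCell (Y : Set F) (p : F) : Convex ℝ (voronoiCell Y p) := by
  have : voronoiCell Y p = ⋂ q ∈ Y, {y | 2 * inner ℝ y (q - p) ≤ ‖q‖ ^ 2 - ‖p‖ ^ 2} := by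
    ext y
    simp only [voronoiCell, mem_ofPred_eq, mem_iInter, dist_le_dist_iff_inner_le]
  rw [this]
  refine convex_iInter₂ fun q _ => convex_halfSpace_le ?_ _
  exact ⟨fun a b => by rw [inner_add_left, mul_add],
    fun c a => by rw [real_inner_smul_left, smul_eq_mul]; ring⟩

theorem pairwise_disjoint_interior_voronoiCell (Y : Set F) :
    Y.Pairwise fun p q => Disjoint (interior (voronoiCell Y p)) (interior (voronoiCell Y q)) := by
  intro p hp q hq hpq
  refine disjoint_left.2 fun y hyp hyq => ?_
  have hmove : Filter.Tendsto (fun t : ℝ => y + t • (q - p)) (𝓝[>] 0) (𝓝 y) := by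
    have : Continuous fun t : ℝ => y + t • (q - p) := by fun_prop
    simpa using (this.tendsto 0).mono_left nhdsWithin_le_nhds
  obtain ⟨t, hz, ht⟩ := ((hmove.eventually (mem_interior_iff_mem_nhds.mp hyp)).and
    self_mem_nhdsWithin).exists
  -- moving from `y` towards `q` leaves the half-space of points at least as close to `p`
  have h₁ := (dist_le_dist_iff_inner_le p q _).1 (hz q hq)
  have h₂ := (dist_le_dist_iff_inner_le q p y).1 (interior_subset hyq p hp)
  have hpos : 0 < ‖q - p‖ ^ 2 := by
    have := norm_pos_iff.2 (sub_ne_zero.2 hpq.symm); positivity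
  rw [inner_add_left, real_inner_smul_left, real_inner_self_eq_norm_sq] at h₁
  rw [← neg_sub q p, inner_neg_right] at h₂
  nlinarith

end VoronoiInner

section TwoLattice

variable {n : ℕ}

local notation "E" => EuclideanSpace ℝ (Fin n)

variable (n) in
def twoLatticeEmbedding : (Fin n → ℤ) →+ E where
  toFun v := (WithLp.equiv 2 (Fin n → ℝ)).symm (fun m => (2 * v m : ℝ))
  map_zero' := by ext; simp
  map_add' v w := by ext; simp [mul_add]

@[simp]
theorem twoLatticeEmbedding_apply (v : Fin n → ℤ) (i : Fin n) :
    twoLatticeEmbedding n v i = 2 * v i :=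
  rfl

variable (n) in
def twoLattice : AddSubgroup E := (twoLatticeEmbedding n).range

variable (n) in
def halfOpenCube : Set E := {y | ∀ i, y i ∈ Ico (0 : ℝ) 2}

instance : Countable (twoLattice n) :=
  (countable_range (twoLatticeEmbedding n)).to_subtype

theorem two_le_norm_of_mem_twoLattice {l : E} (hl : l ∈ twoLattice n) (hl0 : l ≠ 0) :
    2 ≤ ‖l‖ := by
  obtain ⟨v, rfl⟩ := hl
  obtain ⟨i, hi⟩ : ∃ i, v i ≠ 0 := by
    by_contra! h
    exact hl0 (by ext i; simp [h i])
  have : (1 : ℝ) ≤ |(v i : ℝ)| := by exact_mod_cast Int.one_le_abs hi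
  calc (2 : ℝ) ≤ ‖twoLatticeEmbedding n v i‖ := by
        rw [twoLatticeEmbedding_apply, Real.norm_eq_abs, abs_mul, abs_two]; linarith
    _ ≤ ‖twoLatticeEmbedding n v‖ := PiLp.norm_apply_le _ i

theorem two_le_dist_of_mem_twoLattice {p q : E} (hp : p ∈ twoLattice n)
    (hq : q ∈ twoLattice n) (hpq : p ≠ q) : 2 ≤ dist p q := by
  rw [dist_eq_norm]
  exact two_le_norm_of_mem_twoLattice (sub_mem hp hq) (sub_ne_zero.2 hpq)

theorem eq_of_sub_mem_twoLattice {a b : E} (ha : a ∈ halfOpenCube n) (hb : b ∈ halfOpenCube n)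
    (hab : a - b ∈ twoLattice n) : a = b := by
  obtain ⟨v, hv⟩ := hab
  ext i
  have hi := congrArg (· i) hv
  simp only [twoLatticeEmbedding_apply, PiLp.sub_apply] at hi
  obtain ⟨ha₀, ha₂⟩ := ha i
  obtain ⟨hb₀, hb₂⟩ := hb i
  have h₁ : (v i : ℝ) < 1 := by linarith
  have h₂ : (-1 : ℝ) < v i := by linarith
  have : v i = 0 := by
    have h₁' : v i < 1 := by exact_mod_cast h₁
    have h₂' : -1 < v i := by exact_mod_cast h₂
    omega
  rw [this] at hi
  simp only [Int.cast_zero, mul_zero] at hi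
  linarith

theorem measurableSet_halfOpenCube : MeasurableSet (halfOpenCube n) := by
  have : halfOpenCube n = ⋂ i, (fun y : E => y i) ⁻¹' Ico 0 2 := by
    ext y; simp [halfOpenCube]
  rw [this]
  exact .iInter fun i => (EuclideanSpace.proj i : E →L[ℝ] ℝ).continuous.measurable measurableSet_Ico

theorem volume_halfOpenCube : volume (halfOpenCube n) = 2 ^ n := by
  have : halfOpenCube n = (MeasurableEquiv.toLp 2 (Fin n → ℝ)).symm ⁻¹'
      (univ.pi fun _ => Ico (0 : ℝ) 2) := by
    ext y; simp [halfOpenCube]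
  rw [this, (EuclideanSpace.volume_preserving_symm_measurableEquiv_toLp (Fin n)).measure_preimage
    (MeasurableSet.univ_pi fun _ => measurableSet_Ico).nullMeasurableSet, volume_pi_pi]
  simp [Real.volume_Ico]

theorem exists_add_mem_halfOpenCube (y : E) : ∃ l ∈ twoLattice n, l + y ∈ halfOpenCube n := by
  refine ⟨twoLatticeEmbedding n fun i => -⌊y i / 2⌋, ⟨_, rfl⟩, fun i => ?_⟩
  simp only [PiLp.add_apply, twoLatticeEmbedding_apply, Int.cast_neg, mem_Ico]
  constructor <;> linarith [Int.floor_le (y i / 2), Int.lt_floor_add_one (y i / 2)]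

theorem isAddFundamentalDomain_halfOpenCube :
    IsAddFundamentalDomain (twoLattice n) (halfOpenCube n) volume := by
  refine .mk' measurableSet_halfOpenCube.nullMeasurableSet fun y => ?_
  obtain ⟨l, hl, hly⟩ := exists_add_mem_halfOpenCube y
  refine ⟨⟨l, hl⟩, hly, fun m hm => Subtype.ext ?_⟩
  have hm' : (m : E) + y ∈ halfOpenCube n := hm
  have := eq_of_sub_mem_twoLattice hm' hly (by simpa using sub_mem m.2 hl)
  simpa using this

def multilattice (S : Finset E) : Set E := (S : Set E) + (twoLattice n : Set E)

theorem add_mem_multilattice {S : Finset E} {s l : E} (hs : s ∈ S) (hl : l ∈ twoLattice n) :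
    s + l ∈ multilattice S :=
  add_mem_add hs hl

theorem add_mem_multilattice_of_mem {S : Finset E} {p l : E} (hp : p ∈ multilattice S)
    (hl : l ∈ twoLattice n) : p + l ∈ multilattice S := by
  obtain ⟨s, hs, m, hm, rfl⟩ := hp
  rw [add_assoc]
  exact add_mem_multilattice hs (add_mem hm hl)

variable (n) in
/-- `S` lists, inside the fundamental cube, the centres of a `(2ℤ)ⁿ`-periodic packing of unit
balls. -/
def IsPeriodicPacking (S : Finset E) : Prop :=
  (S : Set E) ⊆ halfOpenCube n ∧ (multilattice S).Pairwise fun p q => 2 ≤ dist p q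

theorem isPeriodicPacking_empty : IsPeriodicPacking n ∅ := by
  simp [IsPeriodicPacking, multilattice]

theorem IsPeriodicPacking.pairwise_disjoint_vadd {S : Finset E} (hS : IsPeriodicPacking n S) :
    Pairwise (Disjoint on fun g : twoLattice n => g +ᵥ ⋃ s ∈ S, ball s 1) := by
  rintro ⟨g, hg⟩ ⟨h, hh⟩ hgh
  refine disjoint_left.2 fun z hzg hzh => hgh ?_
  obtain ⟨x, hx, rfl⟩ := mem_vadd_set.1 hzg
  obtain ⟨x', hx', hxx'⟩ := mem_vadd_set.1 hzh
  obtain ⟨s, hs, hxs⟩ := mem_iUnion₂.1 hx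
  obtain ⟨t, ht, hx't⟩ := mem_iUnion₂.1 hx'
  simp only [AddSubgroup.vadd_def, vadd_eq_add] at hxx' ⊢
  have hclose : dist (s + g) (t + h) < 2 := by
    calc dist (s + g) (t + h) ≤ dist (s + g) (g + x) + dist (g + x) (t + h) := dist_triangle ..
      _ = dist s x + dist x' t := by
        rw [add_comm s g, dist_add_left, ← hxx', add_comm t h, dist_add_left]
      _ < 1 + 1 := add_lt_add (by rwa [dist_comm]) hx't
      _ = 2 := one_add_one_eq_two
  have hst : s + g = t + h := by
    by_contra hne
    exact (hS.2 (add_mem_multilattice hs hg) (add_mem_multilattice ht hh) hne).not_gt hclose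
  have : s = t := eq_of_sub_mem_twoLattice (hS.1 hs) (hS.1 ht) <| by
    rw [show s - t = h - g by rw [sub_eq_sub_iff_add_eq_add, hst, add_comm h]]
    exact sub_mem hh hg
  subst this
  simpa using hst

theorem IsPeriodicPacking.card_mul_volume_ball_le {S : Finset E} (hS : IsPeriodicPacking n S) :
    (S.card : ENNReal) * volume (ball (0 : E) 1) ≤ 2 ^ n := by
  have hballs : (S : Set E).PairwiseDisjoint fun s => ball s 1 := by
    intro s hs t ht hst
    refine ball_disjoint_ball ?_
    simpa [one_add_one_eq_two] using hS.2 (add_mem_multilattice hs (zero_mem _))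
      (add_mem_multilattice ht (zero_mem _)) (by simpa)
  calc (S.card : ENNReal) * volume (ball (0 : E) 1) = volume (⋃ s ∈ S, ball s 1) := by
        rw [measure_biUnion_finset hballs fun _ _ => measurableSet_ball]
        simp [Measure.addHaar_ball_center]
    _ ≤ volume (halfOpenCube n) :=
      isAddFundamentalDomain_halfOpenCube.measure_le_of_pairwise_disjoint
        (MeasurableSet.biUnion S.countable_toSet fun _ _ => measurableSet_ball).nullMeasurableSet
        fun g h hgh => ((hS.pairwise_disjoint_vadd hgh).mono inter_subset_left
          inter_subset_left).aedisjoint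
    _ = 2 ^ n := volume_halfOpenCube

theorem IsPeriodicPacking.card_le {S : Finset E} (hn : 0 < n) (hS : IsPeriodicPacking n S) :
    S.card ≤ ⌈(2 ^ n : ℝ) / (volume (closedBall (0 : E) 1)).toReal⌉₊ := by
  have : Nonempty (Fin n) := ⟨⟨0, hn⟩⟩
  have hV₀ : 0 < (volume (closedBall (0 : E) 1)).toReal :=
    ENNReal.toReal_pos (measure_closedBall_pos _ _ one_pos).ne' measure_closedBall_lt_top.ne
  have hcard : (S.card : ℝ) * (volume (closedBall (0 : E) 1)).toReal ≤ 2 ^ n := by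
    have := ENNReal.toReal_mono (by simp) hS.card_mul_volume_ball_le
    rwa [ENNReal.toReal_mul, ← Measure.addHaar_closedBall_eq_addHaar_ball] at this
  exact Nat.cast_le.1 (((le_div_iff₀ hV₀).2 hcard).trans (Nat.le_ceil _))

theorem eq_add_or_mem_of_mem_multilattice_insert {S : Finset E} {c p : E}
    (hp : p ∈ multilattice (insert c S)) :
    (∃ m ∈ twoLattice n, p = c + m) ∨ p ∈ multilattice S := by
  obtain ⟨s, hs, m, hm, rfl⟩ := hp
  rcases Finset.mem_insert.1 hs with rfl | hs
  · exact .inl ⟨m, hm, rfl⟩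
  · exact .inr (add_mem_multilattice hs hm)

theorem IsPeriodicPacking.exists_insert {S : Finset E} (hS : IsPeriodicPacking n S) {y : E}
    (hy : ∀ q ∈ multilattice S, 2 ≤ dist y q) : ∃ c ∉ S, IsPeriodicPacking n (insert c S) := by
  obtain ⟨l, hl, hc⟩ := exists_add_mem_halfOpenCube y
  have hfar : ∀ m ∈ twoLattice n, ∀ q ∈ multilattice S, 2 ≤ dist (l + y + m) q := by
    intro m hm q hq
    calc 2 ≤ dist y (q - (l + m)) :=
          hy _ (sub_eq_add_neg q (l + m) ▸ add_mem_multilattice_of_mem hq (neg_mem (add_mem hl hm)))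
      _ = dist (l + y + m) q := by
          rw [← dist_add_right y _ (l + m), sub_add_cancel, add_right_comm, add_comm y]
  refine ⟨l + y, fun hcS => ?_, by rw [Finset.coe_insert]; exact insert_subset hc hS.1, ?_⟩
  · have := hfar (-l) (neg_mem hl) _ (add_mem_multilattice hcS (neg_mem hl))
    norm_num at this
  intro p hp q hq hpq
  rcases eq_add_or_mem_of_mem_multilattice_insert hp with ⟨m, hm, rfl⟩ | hp <;>
    rcases eq_add_or_mem_of_mem_multilattice_insert hq with ⟨m', hm', rfl⟩ | hq
  · rw [dist_add_left]
    exact two_le_dist_of_mem_twoLattice hm hm' fun h => hpq (by rw [h])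
  · exact hfar m hm q hq
  · rw [dist_comm]
    exact hfar m' hm' p hp
  · exact hS.2 hp hq hpq

theorem exists_isPeriodicPacking_forall_exists_dist_lt (hn : 0 < n) :
    ∃ S : Finset E, IsPeriodicPacking n S ∧
      S.card ≤ ⌈(2 ^ n : ℝ) / (volume (closedBall (0 : E) 1)).toReal⌉₊ ∧
      ∀ y, ∃ q ∈ multilattice S, dist y q < 2 := by
  set sizes := {m | ∃ S : Finset E, IsPeriodicPacking n S ∧ S.card = m}
  have hbdd : BddAbove sizes := ⟨_, by rintro _ ⟨S, hS, rfl⟩; exact hS.card_le hn⟩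
  have hne : sizes.Nonempty := ⟨0, ∅, isPeriodicPacking_empty, rfl⟩
  obtain ⟨S, hS, hmax⟩ := Nat.sSup_mem hne hbdd
  refine ⟨S, hS, hS.card_le hn, fun y => ?_⟩
  by_contra! hy
  obtain ⟨c, hc, hins⟩ := hS.exists_insert hy
  have := le_csSup hbdd ⟨_, hins, rfl⟩
  rw [Finset.card_insert_of_notMem hc, hmax] at this
  omega

end TwoLattice

/-- γ(Bⁿ, k) ≤ 2 for k = ⌈2ⁿ/vol(Bⁿ)⌉: there is a multilattice
Y = ⋃_{i=1}^k ((2ℤ)ⁿ + x i) with an associated tiling by convex cells ψ p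
satisfying Bⁿ + p ⊆ ψ p ⊆ 2Bⁿ + p for every p ∈ Y. -/
theorem stmt_16 (n : ℕ) (hn : 0 < n) :
    ∃ (Y : Set (EuclideanSpace ℝ (Fin n)))
      (x : Fin (⌈(2 ^ n : ℝ) /
        (volume (Metric.closedBall (0 : EuclideanSpace ℝ (Fin n)) 1)).toReal⌉₊)
        → EuclideanSpace ℝ (Fin n))
      (ψ : EuclideanSpace ℝ (Fin n) → Set (EuclideanSpace ℝ (Fin n))),
      Y = {p | ∃ i, ∃ v : Fin n → ℤ,
        p = x i + (WithLp.equiv 2 (Fin n → ℝ)).symm (fun m => (2 * v m : ℝ))} ∧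
      (⋃ p ∈ Y, ψ p) = Set.univ ∧
      (Y.Pairwise fun p q => Disjoint (interior (ψ p)) (interior (ψ q))) ∧
      (∀ p ∈ Y, Convex ℝ (ψ p)) ∧
      (∀ p ∈ Y, p ∈ interior (ψ p)) ∧
      (∀ p ∈ Y, Metric.closedBall p 1 ⊆ ψ p ∧ ψ p ⊆ Metric.closedBall p 2) := by
  obtain ⟨S, hS, hcard, hsat⟩ := exists_isPeriodicPacking_forall_exists_dist_lt hn
  have hne : (multilattice S).Nonempty := let ⟨q, hq, _⟩ := hsat 0; ⟨q, hq⟩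
  obtain ⟨x, hx⟩ := Finset.exists_range_eq_of_card_le (by simpa [multilattice] using hne) hcard
  have hball : ∀ p ∈ multilattice S, closedBall p 1 ⊆ voronoiCell (multilattice S) p :=
    fun p hp => closedBall_subset_voronoiCell (by simpa using hS.2) hp
  refine ⟨multilattice S, x, voronoiCell (multilattice S), ?_,
    biUnion_voronoiCell_eq_univ (isClosed_of_pairwise_le_dist two_pos hS.2) hne,
    pairwise_disjoint_interior_voronoiCell _, fun p _ => convex_voronoiCell _ p,
    fun p hp => mem_interior_iff_mem_nhds.2 <|
      Filter.mem_of_superset (ball_mem_nhds p one_pos) (ball_subset_closedBall.trans (hball p hp)),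
    fun p hp => ⟨hball p hp, voronoiCell_subset_closedBall (fun y => ?_) p⟩⟩
  · ext p
    rw [multilattice, ← hx]
    constructor
    · rintro ⟨_, ⟨i, rfl⟩, _, ⟨v, rfl⟩, rfl⟩
      exact ⟨i, v, rfl⟩
    · rintro ⟨i, v, rfl⟩
      exact ⟨_, ⟨i, rfl⟩, _, ⟨v, rfl⟩, rfl⟩
  · obtain ⟨q, hq, hyq⟩ := hsat y
    exact ⟨q, hq, hyq.le⟩
end
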